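/- Let K be a local field of characteristic p and ψ a Drinfeld A-module of good reduction over O_K with reduction φ̄ over the residue field k. Let x = ∑_{j≤0} x_j τ^j be the unique twisted series with coefficients in O_K, congruent to 1 mod m_K, satisfying ψ_a x = x φ̄_a for all a ∈ A (such x exists and is unique). Then the map χ: K^perf/O_{K^perf} → K^perf/O_{K^perf}, [ξ] ↦ ∑_{j≤0} [x_j ξ^{p^j}], is a well-defined bijection which is A-linear from the A-module structure via φ̄ to the A-module structure via ψ. -/

import Mathlib

/-!
Write `𝒪` for the integers of `K^perf`, `π` for a uniformizer of `K` and
`χ_M ξ = ∑_{n<M} x_n ξ^{p^{-n}}`. Since `v(x_n) > 0` for `n > 0`, the term `x_n ξ^{p^{-n}}` is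
integral as soon as `p^n` exceeds the pole order of `ξ`, so the partial sums stabilise modulo `𝒪`
and define `χ`, additive modulo `𝒪` and preserving `𝒪`. Since moreover `x_0 ≡ 1`, the difference
`ξ - χ ξ` has a smaller pole order than `ξ`: `π^{t+1} ξ ∈ 𝒪 → π^t (ξ - χ ξ) ∈ 𝒪`. Iterating this
contraction gives injectivity and surjectivity modulo `𝒪`.

For `A`-linearity, `ψ_a χ_M - χ_M φ̄_a` is a double sum that we regroup along the diagonals on
which `τ^i τ^{-n}` is the same power of `τ`. The equation `ψ_a x = x φ̄_a` kills every complete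
diagonal; the incomplete ones consist of terms `e ξ^{p^{-n}}` with `v(e) > 0` and `n ≥ M`, which
are integral for large `M`.
-/

noncomputable section

variable (p : ℕ) [Fact p.Prime] (k : Type) [Field k] [Fintype k] [CharP k p]

instance : CharP (LaurentSeries k) p :=
  charP_of_injective_ringHom (HahnSeries.C_injective (Γ := ℤ) (R := k)) p

abbrev Kperf := PerfectClosure (LaurentSeries k) p

abbrev ιK : LaurentSeries k →+* Kperf p k := PerfectClosure.of (LaurentSeries k) p

def Operf : Set (Kperf p k) :=
  {ξ | ∀ (m : ℕ) (z : LaurentSeries k), ξ ^ (p ^ m) = ιK p k z → 0 ≤ z.orderTop}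

/-- Inverse Frobenius iterated `n` times on the perfection: `ξ ↦ ξ^{p^{-n}}`. -/
def frI (n : ℕ) (ξ : Kperf p k) : Kperf p k :=
  (⇑(frobeniusEquiv (Kperf p k) p).symm)^[n] ξ

/-- Coefficient of `τ^{d-m}` of `f x - x f̄` for a twisted polynomial `f` of degree `≤ d`
with coefficients in `O_K`; `f̄` is the coefficientwise residue of `f` lifted to `O_K`. -/
def conjEqCoeff (d : ℕ) (f : ℕ → LaurentSeries k) (x : ℕ → LaurentSeries k) (m : ℕ) :
    LaurentSeries k :=
  ∑ i ∈ (Finset.range (d + 1)).filter (fun i => d ≤ m + i),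
    (f i * (x (m + i - d)) ^ (p ^ i) -
      x (m + i - d) * HahnSeries.C ((⇑(frobeniusEquiv k p).symm)^[m + i - d] ((f i).coeff 0)))

/-- Evaluation of `ψ_a = ∑_{i ≤ D} c_i τ^i` on the perfection. -/
def evPsi (c : ℕ → LaurentSeries k) (D : ℕ) (ξ : Kperf p k) : Kperf p k :=
  ∑ i ∈ Finset.range (D + 1), ιK p k (c i) * ξ ^ (p ^ i)

/-- Evaluation of the reduction `φ̄_a` (coefficientwise residues of `ψ_a`). -/
def evPsiBar (c : ℕ → LaurentSeries k) (D : ℕ) (ξ : Kperf p k) : Kperf p k :=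
  ∑ i ∈ Finset.range (D + 1), ιK p k (HahnSeries.C ((c i).coeff 0)) * ξ ^ (p ^ i)

end

namespace Subring

variable {R : Type*} [CommRing R] {O : Subring R} {π : R} {f : R → R}

theorem mem_of_map_mem (hπ : π ∈ O)
    (hstep : ∀ (t : ℕ) (η : R), π ^ (t + 1) * η ∈ O → π ^ t * (η - f η) ∈ O)
    {ξ : R} {t : ℕ} (hξ : π ^ t * ξ ∈ O) (hfξ : f ξ ∈ O) : ξ ∈ O := by
  induction t with
  | zero => simpa using hξ
  | succ t ih =>
    apply ih
    have := O.add_mem (hstep t ξ hξ) (O.mul_mem (O.pow_mem hπ t) hfξ)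
    rwa [mul_sub, sub_add_cancel] at this

theorem sub_mem_iff_map_sub_mem (hπ : π ∈ O)
    (hstep : ∀ (t : ℕ) (η : R), π ^ (t + 1) * η ∈ O → π ^ t * (η - f η) ∈ O)
    (hbound : ∀ ξ : R, ∃ t : ℕ, π ^ t * ξ ∈ O)
    (hadd : ∀ ξ η, f (ξ + η) - (f ξ + f η) ∈ O) (hmap : ∀ ξ ∈ O, f ξ ∈ O) (ξ η : R) :
    ξ - η ∈ O ↔ f ξ - f η ∈ O := by
  have hsub : f ξ - f η - f (ξ - η) ∈ O := by
    convert hadd (ξ - η) η using 1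
    rw [sub_add_cancel]
    ring
  constructor
  · intro h
    simpa using O.add_mem hsub (hmap _ h)
  · intro h
    obtain ⟨t, ht⟩ := hbound (ξ - η)
    exact mem_of_map_mem hπ hstep ht (by simpa using O.sub_mem h hsub)

theorem exists_map_sub_mem
    (hstep : ∀ (t : ℕ) (η : R), π ^ (t + 1) * η ∈ O → π ^ t * (η - f η) ∈ O)
    (hbound : ∀ ξ : R, ∃ t : ℕ, π ^ t * ξ ∈ O)
    (hadd : ∀ ξ η, f (ξ + η) - (f ξ + f η) ∈ O) (η : R) : ∃ ξ, f ξ - η ∈ O := by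
  obtain ⟨t, ht⟩ := hbound η
  induction t generalizing η with
  | zero =>
    have hf0 : f 0 ∈ O := by simpa using O.neg_mem (hadd 0 0)
    exact ⟨0, O.sub_mem hf0 (by simpa using ht)⟩
  | succ t ih =>
    obtain ⟨ξ, hξ⟩ := ih (η - f η) (hstep t η ht)
    refine ⟨ξ + η, ?_⟩
    convert O.add_mem (hadd ξ η) hξ using 1
    ring

end Subring

theorem Finset.sum_range_sum_filter_eq_sum_sum_range {β : Type*} [AddCommMonoid β] (M d : ℕ)
    (F : ℕ → ℕ → β) :
    ∑ s ∈ range (M + d), ∑ i ∈ (range (d + 1)).filter (fun i => d ≤ s + i), F (s + i - d) i =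
      ∑ i ∈ range (d + 1), ∑ n ∈ range (M + i), F n i := by
  simp_rw [sum_filter]
  rw [sum_comm]
  refine sum_congr rfl fun i hi => ?_
  have hi : i ≤ d := mem_range_succ_iff.mp hi
  rw [← sum_filter, show (range (M + d)).filter (fun s => d ≤ s + i) = Ico (d - i) (M + d) by
      ext; simp; omega,
    sum_Ico_eq_sum_range, show M + d - (d - i) = M + i by omega]
  exact sum_congr rfl fun n _ => by rw [show d - i + n + i - d = n by omega]

namespace LaurentSeries

variable {F : Type*} [Field F]

theorem orderTop_pow (z : LaurentSeries F) (n : ℕ) : (z ^ n).orderTop = n • z.orderTop := by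
  simp only [← HahnSeries.addVal_apply (Γ := ℤ), AddValuation.map_pow]

theorem orderTop_nonneg_of_pow {z : LaurentSeries F} {n : ℕ} (hn : n ≠ 0)
    (h : 0 ≤ (z ^ n).orderTop) : 0 ≤ z.orderTop := by
  rw [orderTop_pow] at h
  cases hz : z.orderTop with
  | top => exact le_top
  | coe a =>
    rw [hz, ← WithTop.coe_nsmul, ← WithTop.coe_zero, WithTop.coe_le_coe] at h
    exact_mod_cast (nsmul_nonneg_iff hn).mp h

theorem exists_single_pow_mul_orderTop_nonneg (z : LaurentSeries F) :
    ∃ t : ℕ, 0 ≤ (HahnSeries.single (1 : ℤ) (1 : F) ^ t * z).orderTop := by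
  cases hz : z.orderTop with
  | top => exact ⟨0, by simp [hz]⟩
  | coe a =>
    refine ⟨(-a).toNat, ?_⟩
    rw [HahnSeries.single_pow, one_pow, HahnSeries.orderTop_mul, hz,
      HahnSeries.orderTop_single one_ne_zero, nsmul_one, ← WithTop.coe_add, ← WithTop.coe_zero,
      WithTop.coe_le_coe]
    omega

end LaurentSeries

theorem iterate_frobeniusEquiv_symm {p : ℕ} (R : Type*) [CommSemiring R] [ExpChar R p]
    [PerfectRing R p] (n : ℕ) :
    (⇑(frobeniusEquiv R p).symm)^[n] = (iterateFrobeniusEquiv R p n).symm := by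
  rw [iterateFrobeniusEquiv_symm, RingAut.coe_pow]

noncomputable section

namespace DrinfeldQuasiIso

open LaurentSeries

variable {p : ℕ} [Fact p.Prime] {k : Type} [Field k] [CharP k p]

local notation "ι" => ιK p k

theorem exists_pow_eq_ιK (ξ : Kperf p k) : ∃ (m : ℕ) (z : LaurentSeries k), ξ ^ p ^ m = ι z := by
  obtain ⟨m, z, h⟩ := IsPRadical.pow_mem (PerfectClosure.of (LaurentSeries k) p) p ξ
  exact ⟨m, z, h.symm⟩

theorem exists_pow_eq_ιK_pair (ξ η : Kperf p k) :
    ∃ (m : ℕ) (z w : LaurentSeries k), ξ ^ p ^ m = ι z ∧ η ^ p ^ m = ι w := by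
  obtain ⟨m, z, hz⟩ := exists_pow_eq_ιK ξ
  obtain ⟨n, w, hw⟩ := exists_pow_eq_ιK η
  refine ⟨m + n, z ^ p ^ n, w ^ p ^ m, ?_, ?_⟩
  · rw [pow_add, pow_mul, hz, map_pow]
  · rw [pow_add, mul_comm, pow_mul, hw, map_pow]

theorem mem_Operf_of_pow_mem {ξ : Kperf p k} {m : ℕ} (h : ξ ^ p ^ m ∈ Operf p k) :
    ξ ∈ Operf p k := by
  intro n z hz
  refine orderTop_nonneg_of_pow (pow_ne_zero m (Fact.out : p.Prime).ne_zero) (h n _ ?_)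
  rw [← pow_mul, mul_comm, pow_mul, hz, map_pow]

theorem ιK_mem_Operf {z : LaurentSeries k} (hz : 0 ≤ z.orderTop) : ι z ∈ Operf p k := by
  intro m w hw
  rw [← map_pow, (ιK p k).injective.eq_iff] at hw
  rw [← hw, orderTop_pow]
  exact nsmul_nonneg hz _

theorem mul_mem_Operf {ξ η : Kperf p k} (hξ : ξ ∈ Operf p k) (hη : η ∈ Operf p k) :
    ξ * η ∈ Operf p k := by
  obtain ⟨m, z, w, hz, hw⟩ := exists_pow_eq_ιK_pair ξ η
  refine mem_Operf_of_pow_mem (m := m) ?_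
  rw [mul_pow, hz, hw, ← map_mul]
  exact ιK_mem_Operf (by rw [HahnSeries.orderTop_mul]; exact add_nonneg (hξ m z hz) (hη m w hw))

theorem add_mem_Operf {ξ η : Kperf p k} (hξ : ξ ∈ Operf p k) (hη : η ∈ Operf p k) :
    ξ + η ∈ Operf p k := by
  obtain ⟨m, z, w, hz, hw⟩ := exists_pow_eq_ιK_pair ξ η
  refine mem_Operf_of_pow_mem (m := m) ?_
  rw [add_pow_char_pow, hz, hw, ← map_add]
  exact ιK_mem_Operf
    ((le_min (hξ m z hz) (hη m w hw)).trans HahnSeries.min_orderTop_le_orderTop_add)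

variable (p k) in
def integerSubring : Subring (Kperf p k) where
  carrier := Operf p k
  mul_mem' := mul_mem_Operf
  one_mem' := by simpa using ιK_mem_Operf (p := p) (z := (1 : LaurentSeries k)) (by simp)
  add_mem' := add_mem_Operf
  zero_mem' := by simpa using ιK_mem_Operf (p := p) (z := (0 : LaurentSeries k)) (by simp)
  neg_mem' hξ := by
    simpa using mul_mem_Operf (ιK_mem_Operf (p := p) (z := (-1 : LaurentSeries k)) (by simp)) hξ

local notation "𝒪" => integerSubring p k

theorem frI_eq_symm_iterateFrobeniusEquiv (n : ℕ) :
    frI p k n = (iterateFrobeniusEquiv (Kperf p k) p n).symm :=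
  iterate_frobeniusEquiv_symm _ n

theorem frI_eq_iff {n : ℕ} {ξ η : Kperf p k} : frI p k n ξ = η ↔ ξ = η ^ p ^ n := by
  rw [frI_eq_symm_iterateFrobeniusEquiv, RingEquiv.symm_apply_eq, iterateFrobeniusEquiv_def]

theorem frI_pow_pow (n : ℕ) (ξ : Kperf p k) : frI p k n ξ ^ p ^ n = ξ :=
  iterate_frobeniusEquiv_symm_pow_p_pow _ p ξ n

theorem frI_apply_pow_pow (n : ℕ) (ξ : Kperf p k) : frI p k n (ξ ^ p ^ n) = ξ :=
  frI_eq_iff.mpr rfl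

theorem frI_pow_pow_of_le {n i d : ℕ} (hi : i ≤ d) (ξ : Kperf p k) :
    frI p k n ξ ^ p ^ i = frI p k (n + d - i) (ξ ^ p ^ d) := by
  rw [eq_comm, frI_eq_iff, ← pow_mul, ← pow_add, show i + (n + d - i) = n + d by omega, pow_add,
    pow_mul, frI_pow_pow]

theorem frI_add (n : ℕ) (ξ η : Kperf p k) : frI p k n (ξ + η) = frI p k n ξ + frI p k n η := by
  rw [frI_eq_symm_iterateFrobeniusEquiv, map_add]

theorem frI_ιK_C [PerfectRing k p] (n : ℕ) (α : k) :
    frI p k n (ι (HahnSeries.C α)) = ι (HahnSeries.C ((⇑(frobeniusEquiv k p).symm)^[n] α)) :=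
  (RingHom.map_iterate_frobeniusEquiv_symm p ((ιK p k).comp HahnSeries.C) n α).symm

theorem frI_mem {ξ : Kperf p k} (hξ : ξ ∈ 𝒪) (n : ℕ) : frI p k n ξ ∈ 𝒪 :=
  mem_Operf_of_pow_mem (m := n) (by rwa [frI_pow_pow])

variable (p k) in
def uniformizer : Kperf p k := ι (HahnSeries.single 1 1)

local notation "π" => uniformizer p k

theorem uniformizer_mem : π ∈ 𝒪 :=
  ιK_mem_Operf (by rw [HahnSeries.orderTop_single one_ne_zero]; exact_mod_cast zero_le_one)

theorem exists_uniformizer_pow_mul_mem (ξ : Kperf p k) : ∃ t : ℕ, π ^ t * ξ ∈ 𝒪 := by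
  obtain ⟨m, z, hz⟩ := exists_pow_eq_ιK ξ
  obtain ⟨t, ht⟩ := exists_single_pow_mul_orderTop_nonneg z
  refine ⟨t, mem_Operf_of_pow_mem (m := m) ?_⟩
  have hpm : 1 ≤ p ^ m := Nat.one_le_pow _ _ (Fact.out : p.Prime).pos
  have : (π ^ t * ξ) ^ p ^ m = π ^ (t * (p ^ m - 1)) * ι (HahnSeries.single 1 1 ^ t * z) := by
    rw [map_mul, map_pow, ← uniformizer, ← mul_assoc, ← pow_add, mul_pow, hz, ← pow_mul,
      Nat.mul_sub_one, Nat.sub_add_cancel (Nat.le_mul_of_pos_right t hpm)]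
  rw [this]
  exact mul_mem (pow_mem uniformizer_mem _) (ιK_mem_Operf ht)

theorem uniformizer_pow_mul_frI_mem {t j n : ℕ} {η : Kperf p k} (hη : π ^ t * η ∈ 𝒪)
    (htj : t ≤ j * p ^ n) : π ^ j * frI p k n η ∈ 𝒪 := by
  have : π ^ j * frI p k n η = frI p k n (π ^ (j * p ^ n - t) * (π ^ t * η)) := by
    rw [← mul_assoc, ← pow_add, Nat.sub_add_cancel htj, pow_mul,
      frI_eq_symm_iterateFrobeniusEquiv, map_mul, ← frI_eq_symm_iterateFrobeniusEquiv,
      frI_apply_pow_pow]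
  rw [this]
  exact frI_mem (mul_mem (pow_mem uniformizer_mem _) hη) n

theorem ιK_mul_mem_of_orderTop_pos {u : LaurentSeries k} {ζ : Kperf p k}
    (hu : 0 < u.orderTop) (hζ : π * ζ ∈ 𝒪) : ι u * ζ ∈ 𝒪 := by
  have hinv : ι (HahnSeries.single (-1) 1) * π = 1 := by
    rw [uniformizer, ← map_mul, HahnSeries.single_mul_single]
    simp
  have hu' : 0 ≤ (HahnSeries.single (-1 : ℤ) (1 : k) * u).orderTop := by
    rw [HahnSeries.orderTop_mul, HahnSeries.orderTop_single one_ne_zero]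
    cases h : u.orderTop with
    | top => simp
    | coe a =>
      rw [h] at hu
      norm_cast at hu ⊢
      omega
  have : ι u * ζ = ι (HahnSeries.single (-1) 1 * u) * (π * ζ) := by
    rw [map_mul]
    linear_combination -(ι u * ζ) * hinv
  rw [this]
  exact mul_mem (ιK_mem_Operf hu') hζ

variable (x : ℕ → LaurentSeries k)

def partialSum (M : ℕ) (ξ : Kperf p k) : Kperf p k :=
  ∑ n ∈ Finset.range M, ι (x n) * frI p k n ξ

theorem partialSum_add (M : ℕ) (ξ η : Kperf p k) :
    partialSum x M (ξ + η) = partialSum x M ξ + partialSum x M η := by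
  simp only [partialSum, frI_add, mul_add, Finset.sum_add_distrib]

def poleBound (ξ : Kperf p k) : ℕ := Classical.choose (exists_uniformizer_pow_mul_mem ξ)

theorem uniformizer_pow_poleBound_mul_mem (ξ : Kperf p k) : π ^ poleBound ξ * ξ ∈ 𝒪 :=
  Classical.choose_spec (exists_uniformizer_pow_mul_mem ξ)

theorem ιK_mul_frI_mem_of_poleBound_lt {u : LaurentSeries k} (hu : 0 < u.orderTop)
    {ξ : Kperf p k} {n : ℕ} (hn : poleBound ξ < n) : ι u * frI p k n ξ ∈ 𝒪 := by
  refine ιK_mul_mem_of_orderTop_pos hu ?_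
  simpa using uniformizer_pow_mul_frI_mem (j := 1) (uniformizer_pow_poleBound_mul_mem ξ)
    (by simpa using (hn.trans (Nat.lt_pow_self (Fact.out : p.Prime).one_lt)).le)

def quasiIso (ξ : Kperf p k) : Kperf p k := partialSum x (poleBound ξ + 1) ξ

variable {x}

theorem quasiIso_sub_partialSum_mem (hxpos : ∀ n, 0 < n → 0 < (x n).orderTop)
    {ξ : Kperf p k} {M : ℕ} (hM : poleBound ξ < M) : quasiIso x ξ - partialSum x M ξ ∈ 𝒪 := by
  rw [quasiIso, partialSum, partialSum, ← Finset.sum_range_add_sum_Ico _ hM, sub_add_cancel_left]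
  refine neg_mem (sum_mem fun n hn => ?_)
  rw [Finset.mem_Ico] at hn
  exact ιK_mul_frI_mem_of_poleBound_lt (hxpos n (by omega)) (by omega)

theorem quasiIso_add_sub_mem (hxpos : ∀ n, 0 < n → 0 < (x n).orderTop) (ξ η : Kperf p k) :
    quasiIso x (ξ + η) - (quasiIso x ξ + quasiIso x η) ∈ 𝒪 := by
  set M := max (poleBound (ξ + η)) (max (poleBound ξ) (poleBound η)) + 1
  have h₁ := quasiIso_sub_partialSum_mem hxpos (M := M) (ξ := ξ + η) (by omega)
  have h₂ := quasiIso_sub_partialSum_mem hxpos (M := M) (ξ := ξ) (by omega)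
  have h₃ := quasiIso_sub_partialSum_mem hxpos (M := M) (ξ := η) (by omega)
  convert sub_mem (sub_mem h₁ h₂) h₃ using 1
  rw [partialSum_add]
  ring

theorem quasiIso_mem (hxint : ∀ n, 0 ≤ (x n).orderTop) {ξ : Kperf p k} (hξ : ξ ∈ 𝒪) :
    quasiIso x ξ ∈ 𝒪 := by
  unfold quasiIso partialSum
  exact sum_mem fun n _ => mul_mem (ιK_mem_Operf (hxint n)) (frI_mem hξ n)

theorem uniformizer_pow_mul_sub_quasiIso_mem (hxpos : ∀ n, 0 < n → 0 < (x n).orderTop)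
    (hx0 : 0 < (x 0 - 1).orderTop) (t : ℕ) {η : Kperf p k} (hη : π ^ (t + 1) * η ∈ 𝒪) :
    π ^ t * (η - quasiIso x η) ∈ 𝒪 := by
  have hlead : ι (1 - x 0) * (π ^ t * η) ∈ 𝒪 := by
    refine ιK_mul_mem_of_orderTop_pos ?_ (by rwa [← mul_assoc, ← pow_succ'])
    rwa [← neg_sub, HahnSeries.orderTop_neg]
  have htail (n : ℕ) : ι (x (n + 1)) * (π ^ t * frI p k (n + 1) η) ∈ 𝒪 := by
    refine ιK_mul_mem_of_orderTop_pos (hxpos _ n.succ_pos) ?_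
    rw [← mul_assoc, ← pow_succ']
    exact uniformizer_pow_mul_frI_mem hη
      (Nat.le_mul_of_pos_right _ (pow_pos (Fact.out : p.Prime).pos _))
  convert sub_mem hlead (sum_mem fun n (_ : n ∈ Finset.range (poleBound η)) => htail n) using 1
  rw [quasiIso, partialSum, Finset.sum_range_succ', map_sub, map_one]
  simp only [mul_left_comm (ι _) (π ^ t), ← Finset.mul_sum]
  rw [show frI p k 0 η = η from rfl]
  ring

theorem evPsi_sub (c : ℕ → LaurentSeries k) (d : ℕ) (ξ η : Kperf p k) :
    evPsi p k c d (ξ - η) = evPsi p k c d ξ - evPsi p k c d η := by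
  simp only [evPsi, sub_pow_char_pow, mul_sub, Finset.sum_sub_distrib]

theorem evPsi_mem {c : ℕ → LaurentSeries k} (hc : ∀ i, 0 ≤ (c i).orderTop) (d : ℕ)
    {ξ : Kperf p k} (hξ : ξ ∈ 𝒪) : evPsi p k c d ξ ∈ 𝒪 :=
  sum_mem fun i _ => mul_mem (ιK_mem_Operf (hc i)) (pow_mem hξ _)

variable (x) in
/-- The contribution of `c_i τ^i` and `x_n τ^{-n}` to the coefficient of `τ^{i-n}` in
`ψ x - x φ̄`; `conjEqCoeff` sums these along a diagonal. -/
def conjTerm [PerfectRing k p] (c : ℕ → LaurentSeries k) (n i : ℕ) : LaurentSeries k :=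
  c i * x n ^ p ^ i - x n * HahnSeries.C ((⇑(frobeniusEquiv k p).symm)^[n] ((c i).coeff 0))

theorem conjTerm_orderTop_pos [PerfectRing k p] {c : ℕ → LaurentSeries k}
    (hc : ∀ i, 0 ≤ (c i).orderTop) {n : ℕ} (hxn : 0 < (x n).orderTop) (i : ℕ) :
    0 < (conjTerm x c n i).orderTop := by
  refine lt_of_lt_of_le (lt_min ?_ ?_) HahnSeries.min_orderTop_le_orderTop_sub
  · rw [HahnSeries.orderTop_mul, orderTop_pow]
    exact (nsmul_pos hxn (pow_ne_zero _ (Fact.out : p.Prime).ne_zero)).trans_le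
      (le_add_of_nonneg_left (hc i))
  · rw [HahnSeries.orderTop_mul, HahnSeries.C_apply]
    exact hxn.trans_le (le_add_of_nonneg_right HahnSeries.orderTop_single_le)

theorem evPsi_partialSum_sub_partialSum_evPsiBar [PerfectRing k p] (c : ℕ → LaurentSeries k)
    (d M : ℕ) (ξ : Kperf p k) :
    evPsi p k c d (partialSum x M ξ) - partialSum x M (evPsiBar p k c d ξ) =
      ∑ i ∈ Finset.range (d + 1), ∑ n ∈ Finset.range M,
        ι (conjTerm x c n i) * frI p k (n + d - i) (ξ ^ p ^ d) := by
  have hψ : ∀ i ∈ Finset.range (d + 1), ι (c i) * partialSum x M ξ ^ p ^ i =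
      ∑ n ∈ Finset.range M, ι (c i * x n ^ p ^ i) * frI p k (n + d - i) (ξ ^ p ^ d) := by
    intro i hi
    rw [partialSum, sum_pow_char_pow, Finset.mul_sum]
    refine Finset.sum_congr rfl fun n _ => ?_
    rw [mul_pow, ← map_pow, frI_pow_pow_of_le (Finset.mem_range_succ_iff.mp hi), map_mul,
      mul_assoc]
  have hφ : ∀ n ∈ Finset.range M, ι (x n) * frI p k n (evPsiBar p k c d ξ) =
      ∑ i ∈ Finset.range (d + 1), ι (x n * HahnSeries.C
        ((⇑(frobeniusEquiv k p).symm)^[n] ((c i).coeff 0))) * frI p k (n + d - i) (ξ ^ p ^ d) := by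
    intro n _
    rw [evPsiBar, frI_eq_symm_iterateFrobeniusEquiv, map_sum, Finset.mul_sum]
    refine Finset.sum_congr rfl fun i hi => ?_
    rw [map_mul, map_pow, ← frI_eq_symm_iterateFrobeniusEquiv, frI_ιK_C,
      frI_pow_pow_of_le (Finset.mem_range_succ_iff.mp hi), map_mul, mul_assoc]
  rw [evPsi, Finset.sum_congr rfl hψ, partialSum, Finset.sum_congr rfl hφ,
    Finset.sum_comm (s := Finset.range M), ← Finset.sum_sub_distrib]
  refine Finset.sum_congr rfl fun i _ => ?_
  rw [← Finset.sum_sub_distrib]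
  exact Finset.sum_congr rfl fun n _ => by rw [conjTerm, map_sub, sub_mul]

theorem sum_conjTerm_mul_frI_eq_zero [Fintype k] {c : ℕ → LaurentSeries k} {d : ℕ}
    (hconj : ∀ m, conjEqCoeff p k d c x m = 0) (M : ℕ) (ζ : Kperf p k) :
    ∑ i ∈ Finset.range (d + 1), ∑ n ∈ Finset.range (M + i),
      ι (conjTerm x c n i) * frI p k (n + d - i) ζ = 0 := by
  rw [← Finset.sum_range_sum_filter_eq_sum_sum_range]
  refine Finset.sum_eq_zero fun s _ => ?_
  calc _ = ∑ i ∈ (Finset.range (d + 1)).filter (fun i => d ≤ s + i),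
          ι (conjTerm x c (s + i - d) i) * frI p k s ζ :=
        Finset.sum_congr rfl fun i hi => by rw [show s + i - d + d - i = s by simp at hi; omega]
    _ = ι (conjEqCoeff p k d c x s) * frI p k s ζ := by
        rw [conjEqCoeff, map_sum, Finset.sum_mul]
        rfl
    _ = 0 := by rw [hconj, map_zero, zero_mul]

theorem evPsi_partialSum_sub_partialSum_evPsiBar_mem [Fintype k] {c : ℕ → LaurentSeries k}
    {d : ℕ} (hc : ∀ i, 0 ≤ (c i).orderTop) (hconj : ∀ m, conjEqCoeff p k d c x m = 0)
    (hxpos : ∀ n, 0 < n → 0 < (x n).orderTop) {ξ : Kperf p k} {M : ℕ}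
    (hM : poleBound (ξ ^ p ^ d) < M) :
    evPsi p k c d (partialSum x M ξ) - partialSum x M (evPsiBar p k c d ξ) ∈ 𝒪 := by
  set G : ℕ → ℕ → Kperf p k := fun n i => ι (conjTerm x c n i) * frI p k (n + d - i) (ξ ^ p ^ d)
  have htrunc : ∑ i ∈ Finset.range (d + 1), ∑ n ∈ Finset.range M, G n i =
      -∑ i ∈ Finset.range (d + 1), ∑ n ∈ Finset.Ico M (M + i), G n i := by
    rw [eq_neg_iff_add_eq_zero, ← Finset.sum_add_distrib,
      ← sum_conjTerm_mul_frI_eq_zero hconj M (ξ ^ p ^ d)]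
    exact Finset.sum_congr rfl fun i _ => Finset.sum_range_add_sum_Ico _ (by omega)
  rw [evPsi_partialSum_sub_partialSum_evPsiBar, htrunc]
  refine neg_mem (sum_mem fun i hi => sum_mem fun n hn => ?_)
  rw [Finset.mem_range] at hi
  rw [Finset.mem_Ico] at hn
  exact ιK_mul_frI_mem_of_poleBound_lt (conjTerm_orderTop_pos hc (hxpos n (by omega)) i)
    (by omega)

theorem quasiIso_evPsiBar_sub_evPsi_quasiIso_mem [Fintype k] {c : ℕ → LaurentSeries k}
    {d : ℕ} (hc : ∀ i, 0 ≤ (c i).orderTop) (hconj : ∀ m, conjEqCoeff p k d c x m = 0)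
    (hxpos : ∀ n, 0 < n → 0 < (x n).orderTop) (ξ : Kperf p k) :
    quasiIso x (evPsiBar p k c d ξ) - evPsi p k c d (quasiIso x ξ) ∈ 𝒪 := by
  set M := max (poleBound (evPsiBar p k c d ξ)) (max (poleBound ξ) (poleBound (ξ ^ p ^ d))) + 1
  have h₁ := quasiIso_sub_partialSum_mem hxpos (ξ := evPsiBar p k c d ξ) (M := M) (by omega)
  have h₂ := evPsi_mem hc d (quasiIso_sub_partialSum_mem hxpos (ξ := ξ) (M := M) (by omega))
  have h₃ := evPsi_partialSum_sub_partialSum_evPsiBar_mem hc hconj hxpos (ξ := ξ) (M := M)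
    (by omega)
  convert sub_mem (sub_mem h₁ h₂) h₃ using 1
  rw [evPsi_sub]
  ring

end DrinfeldQuasiIso

end

noncomputable section

variable (p : ℕ) [Fact p.Prime] (k : Type) [Field k] [Fintype k] [CharP k p]

open DrinfeldQuasiIso in
theorem canonical_quasiIso_bijective_A_linear
    (A : Type) (c : A → ℕ → LaurentSeries k) (D : A → ℕ)
    (hint : ∀ a i, 0 ≤ (c a i).orderTop)
    (x : ℕ → LaurentSeries k)
    (hxint : ∀ n, 0 ≤ (x n).orderTop)
    (hx0 : 0 < (x 0 - 1).orderTop) (hxpos : ∀ n, 0 < n → 0 < (x n).orderTop)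
    (hconj : ∀ (a : A) (m : ℕ), conjEqCoeff p k (D a) (c a) x m = 0) :
    ∃ χ : Kperf p k → Kperf p k,
      (∀ ξ : Kperf p k, ∃ N : ℕ, ∀ M, N ≤ M →
        (χ ξ - ∑ n ∈ Finset.range M, ιK p k (x n) * frI p k n ξ) ∈ Operf p k) ∧
      (∀ ξ η : Kperf p k, (ξ - η ∈ Operf p k ↔ χ ξ - χ η ∈ Operf p k)) ∧
      (∀ η : Kperf p k, ∃ ξ, χ ξ - η ∈ Operf p k) ∧
      (∀ (a : A) (ξ : Kperf p k),
        χ (evPsiBar p k (c a) (D a) ξ) - evPsi p k (c a) (D a) (χ ξ) ∈ Operf p k) := by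
  have hstep := uniformizer_pow_mul_sub_quasiIso_mem hxpos hx0
  have hadd := quasiIso_add_sub_mem hxpos
  refine ⟨quasiIso x, fun ξ => ⟨poleBound ξ + 1, fun M => quasiIso_sub_partialSum_mem hxpos⟩,
    Subring.sub_mem_iff_map_sub_mem uniformizer_mem hstep exists_uniformizer_pow_mul_mem hadd
      fun _ => quasiIso_mem hxint,
    Subring.exists_map_sub_mem hstep exists_uniformizer_pow_mul_mem hadd,
    fun a => quasiIso_evPsiBar_sub_evPsi_quasiIso_mem (hint a) (hconj a) hxpos⟩

end
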